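/- arXiv:0809.3413 — 9 statements merged into one kernel-verified Lean document; each statement's English description precedes it below -/
import Mathlib

section
/- Let p be a prime and let α = (α₁, …, α_r) be a basis for a finite abelian p-group G, with ord(α_i) = p^{n_i}. Let j and k be nonnegative integers with j < k, and set q_i = p^{j + max(0, n_i − k)} and α(j,k) = (α₁^{q₁}, …, α_r^{q_r}). Then α(j,k) is a basis for the subgroup G(j,k) = {β^{p^j} : β ∈ G, β^{p^k} = 1}; that is, ⟨α(j,k)⟩ = G(j,k) and every element of G(j,k) has a unique representation ∏_{i=1}^r (α_i^{q_i})^{x_i} with integers 0 ≤ x_i < ord(α_i^{q_i}). -/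
/-- A tuple `α` of elements of a finite abelian group is a *basis* for a subgroup `H`
if it generates `H` and every element of `H` has a unique representation
`∏ i, α i ^ x i` with `0 ≤ x i < orderOf (α i)`. -/
def IsBasis {G : Type*} [CommGroup G] {ι : Type*} [Fintype ι]
    (α : ι → G) (H : Subgroup G) : Prop :=
  Subgroup.closure (Set.range α) = H ∧
    ∀ β ∈ H, ∃! x : ι → ℕ,
      (∀ i, x i < orderOf (α i)) ∧ ∏ i, α i ^ x i = β

/-!
If `β = ∏ αᵢ ^ yᵢ`, then `β ^ a = 1` forces `αᵢ ^ (yᵢ * a) = 1` for each `i` by uniqueness of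
coordinates, i.e. `orderOf (αᵢ ^ a) ∣ yᵢ`. Hence `{β ^ b : β ^ a = 1}` is generated by the powers
`αᵢ ^ (b * orderOf (αᵢ ^ a))`, which for `a = p ^ k`, `b = p ^ j` and `orderOf αᵢ = p ^ nᵢ` are the
`αᵢ ^ p ^ (j + (nᵢ - k))`. Uniqueness of coordinates for these generators is inherited from `α`:
any family of powers `αᵢ ^ mᵢ` of a basis is a basis of the subgroup it generates.
-/

open Subgroup

lemma IsOfFinOrder.exists_pow_eq_zpow_of_lt_orderOf {G : Type*} [Group G] {a : G}
    (ha : IsOfFinOrder a) (z : ℤ) : ∃ m < orderOf a, a ^ m = a ^ z := by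
  obtain ⟨m, hm⟩ := ha.mem_powers_iff_mem_zpowers.2 ⟨z, rfl⟩
  exact ⟨m % orderOf a, Nat.mod_lt _ ha.orderOf_pos, by rw [pow_mod_orderOf]; exact hm⟩

lemma orderOf_pow_pow_eq_pow_sub {M : Type*} [Monoid M] {a : M} {p m : ℕ} (hp : 0 < p)
    (ha : orderOf a = p ^ m) (e : ℕ) : orderOf (a ^ p ^ e) = p ^ (m - e) := by
  rw [orderOf_pow' a (pow_ne_zero e hp.ne'), ha]
  rcases le_total m e with h | h
  · rw [Nat.gcd_eq_left (pow_dvd_pow p h), Nat.div_self (pow_pos hp m), Nat.sub_eq_zero_of_le h,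
      pow_zero]
  · rw [Nat.gcd_eq_right (pow_dvd_pow p h), Nat.pow_div h hp]

namespace IsBasis

variable {G : Type*} [CommGroup G] {ι : Type*} [Fintype ι] {α : ι → G} {H : Subgroup G}

lemma orderOf_pos (hα : IsBasis α H) (i : ι) : 0 < orderOf (α i) := by
  obtain ⟨x, ⟨hx, -⟩, -⟩ := hα.2 1 H.one_mem
  exact (Nat.zero_le _).trans_lt (hx i)

lemma exists_prod_pow_eq (hα : IsBasis α H) {β : G} (hβ : β ∈ H) :
    ∃ y : ι → ℕ, ∏ i, α i ^ y i = β :=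
  (hα.2 β hβ).exists.imp fun _ hy => hy.2

lemma pow_eq_pow_of_prod_pow_eq (hα : IsBasis α H) {z w : ι → ℕ}
    (h : ∏ i, α i ^ z i = ∏ i, α i ^ w i) (i : ι) : α i ^ z i = α i ^ w i := by
  have hmem : ∏ i, α i ^ z i ∈ H :=
    hα.1 ▸ prod_mem fun i _ => pow_mem (subset_closure (Set.mem_range_self i)) _
  obtain ⟨x, -, hx⟩ := hα.2 _ hmem
  have hreduce : ∀ v : ι → ℕ, ∏ i, α i ^ v i = ∏ i, α i ^ z i →
      (fun i => v i % orderOf (α i)) = x := fun v hv =>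
    hx _ ⟨fun i => Nat.mod_lt _ (hα.orderOf_pos i), by simpa only [pow_mod_orderOf] using hv⟩
  rw [← pow_mod_orderOf, congrFun (hreduce z rfl) i, ← congrFun (hreduce w h.symm) i,
    pow_mod_orderOf]

lemma orderOf_pow_dvd_of_prod_pow_pow_eq_one (hα : IsBasis α H) {y : ι → ℕ} {a : ℕ}
    (h : (∏ i, α i ^ y i) ^ a = 1) (i : ι) : orderOf (α i ^ a) ∣ y i := by
  have hcoord := hα.pow_eq_pow_of_prod_pow_eq (z := fun i => y i * a) (w := 0)
    (by simpa only [pow_mul, Finset.prod_pow, Pi.zero_apply, pow_zero, Finset.prod_const_one]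
      using h) i
  rw [orderOf_dvd_iff_pow_eq_one, ← pow_mul, mul_comm]
  simpa using hcoord

theorem pow (hα : IsBasis α H) (m : ι → ℕ) :
    IsBasis (fun i => α i ^ m i) (closure (Set.range fun i => α i ^ m i)) := by
  refine ⟨rfl, fun β hβ => ?_⟩
  obtain ⟨z, rfl⟩ := exists_of_mem_closure_range _ _ hβ
  have hfin : ∀ i, IsOfFinOrder (α i ^ m i) := fun i =>
    (orderOf_pos_iff.1 (hα.orderOf_pos i)).pow
  choose x hxlt hx using fun i => (hfin i).exists_pow_eq_zpow_of_lt_orderOf (z i)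
  refine ⟨x, ⟨hxlt, Finset.prod_congr rfl fun i _ => hx i⟩, fun x' ⟨hx'lt, hx'⟩ => ?_⟩
  funext i
  refine pow_injOn_Iio_orderOf (hx'lt i) (hxlt i) ?_
  have hprod : ∏ i, α i ^ (m i * x' i) = ∏ i, α i ^ (m i * x i) := by
    simpa only [pow_mul, hx] using hx'
  simpa only [pow_mul] using hα.pow_eq_pow_of_prod_pow_eq hprod i

theorem closure_pow_mul_orderOf_pow_eq_map_ker (hα : IsBasis α ⊤) (a b : ℕ) :
    closure (Set.range fun i => α i ^ (b * orderOf (α i ^ a))) =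
      (powMonoidHom a : G →* G).ker.map (powMonoidHom b) := by
  refine le_antisymm (closure_le _ |>.2 ?_) ?_
  · rintro _ ⟨i, rfl⟩
    refine ⟨α i ^ orderOf (α i ^ a), ?_, ?_⟩
    · rw [SetLike.mem_coe, MonoidHom.mem_ker, powMonoidHom_apply, ← pow_mul, mul_comm, pow_mul,
        pow_orderOf_eq_one]
    · rw [powMonoidHom_apply, ← pow_mul, mul_comm]
  · rintro _ ⟨β, hβ, rfl⟩
    obtain ⟨y, rfl⟩ := hα.exists_prod_pow_eq (mem_top β)
    choose t ht using hα.orderOf_pow_dvd_of_prod_pow_pow_eq_one (MonoidHom.mem_ker.1 hβ)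
    rw [powMonoidHom_apply, ← Finset.prod_pow]
    refine prod_mem fun i _ => ?_
    rw [ht i, ← pow_mul, mul_right_comm, mul_comm _ b, pow_mul]
    exact pow_mem (subset_closure (Set.mem_range_self i)) _

end IsBasis

theorem basis_of_subgroup_jk_general {p : ℕ} (hp : p.Prime) {G : Type*} [CommGroup G]
    {r : ℕ} (α : Fin r → G) (n : Fin r → ℕ)
    (hord : ∀ i, orderOf (α i) = p ^ n i)
    (hα : IsBasis α (⊤ : Subgroup G))
    (j k : ℕ) :
    ((Subgroup.closure (Set.range fun i => α i ^ p ^ (j + (n i - k))) : Subgroup G) : Set G)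
        = {g : G | ∃ β : G, β ^ p ^ k = 1 ∧ β ^ p ^ j = g} ∧
      ∀ g ∈ {g : G | ∃ β : G, β ^ p ^ k = 1 ∧ β ^ p ^ j = g},
        ∃! x : Fin r → ℕ,
          (∀ i, x i < orderOf (α i ^ p ^ (j + (n i - k)))) ∧
            ∏ i, (α i ^ p ^ (j + (n i - k))) ^ x i = g := by
  have hexp : ∀ i, p ^ (j + (n i - k)) = p ^ j * orderOf (α i ^ p ^ k) := fun i => by
    rw [orderOf_pow_pow_eq_pow_sub hp.pos (hord i), pow_add]
  have hS : ((closure (Set.range fun i => α i ^ p ^ (j + (n i - k))) : Subgroup G) : Set G) =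
      {g : G | ∃ β : G, β ^ p ^ k = 1 ∧ β ^ p ^ j = g} := by
    simp only [hexp, hα.closure_pow_mul_orderOf_pow_eq_map_ker, coe_map, MonoidHom.coe_ker]
    ext g
    simp
  exact ⟨hS, fun g hg => (hα.pow _).2 g (by rwa [← SetLike.mem_coe, hS])⟩

/-- Lemma 1 of the paper: with `q i = p ^ (j + max 0 (n i - k))`,
the tuple `α(j,k) = (α i ^ q i)` is a basis for
`G(j,k) = {β ^ p ^ j : β ∈ G, β ^ p ^ k = 1}`. -/
theorem basis_of_subgroup_jk {p : ℕ} (hp : p.Prime) {G : Type*} [CommGroup G]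
    [Fintype G] (hG : IsPGroup p G) {r : ℕ} (α : Fin r → G) (n : Fin r → ℕ)
    (hord : ∀ i, orderOf (α i) = p ^ n i)
    (hα : IsBasis α (⊤ : Subgroup G))
    (j k : ℕ) (hjk : j < k) :
    ((Subgroup.closure (Set.range fun i => α i ^ p ^ (j + (n i - k))) : Subgroup G) : Set G)
        = {g : G | ∃ β : G, β ^ p ^ k = 1 ∧ β ^ p ^ j = g} ∧
      ∀ g ∈ {g : G | ∃ β : G, β ^ p ^ k = 1 ∧ β ^ p ^ j = g},
        ∃! x : Fin r → ℕ,
          (∀ i, x i < orderOf (α i ^ p ^ (j + (n i - k)))) ∧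
            ∏ i, (α i ^ p ^ (j + (n i - k))) ^ x i = g :=
  basis_of_subgroup_jk_general hp α n hord hα j k
end

section
/- Let p be a prime, let α be a basis for a finite abelian p-group G, and let j, j', k', k be integers with 0 ≤ j ≤ j' < k' ≤ k. Let β ∈ G(j,k), and suppose x is an integer vector with α(k',k)^x = β^{p^{k'−j}}. Then the element γ := β^{p^{j'−j}} · α(j',k)^{−x} lies in G(j',k'). -/
/-!
With `δ := α(0,k)^x` one has `α(m,k)^x = δ^{p^m}` for every `m`, so the hypothesis says
`δ^{p^{k'}} = b^{p^{k'}}` for a `b` with `b^{p^j} = β`. Hence `b δ⁻¹` is killed by `p^{k'}`,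
and its `p^{j'}`-th power is `β^{p^{j'-j}} α(j',k)^{-x} = γ`.
-/

section

variable {G : Type*} [CommGroup G]

lemma pow_pow_pow_sub {p j k : ℕ} (hjk : j ≤ k) (b : G) :
    (b ^ p ^ j) ^ p ^ (k - j) = b ^ p ^ k := by
  rw [← pow_mul, ← pow_add, Nat.add_sub_cancel' hjk]

lemma Finset.prod_zpow_pow {ι : Type*} (s : Finset ι) (a : ι → G) (x : ι → ℤ) (m : ℕ) :
    (∏ i ∈ s, a i ^ x i) ^ m = ∏ i ∈ s, (a i ^ m) ^ x i := by
  rw [← Finset.prod_pow]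
  refine Finset.prod_congr rfl fun i _ => ?_
  rw [← zpow_natCast, ← zpow_natCast, zpow_comm]

lemma Finset.prod_zpow_pow_prime_pow {ι : Type*} (s : Finset ι) (a : ι → G) (x : ι → ℤ)
    (p m : ℕ) (e : ι → ℕ) :
    (∏ i ∈ s, (a i ^ p ^ e i) ^ x i) ^ p ^ m = ∏ i ∈ s, (a i ^ p ^ (m + e i)) ^ x i := by
  rw [Finset.prod_zpow_pow]
  refine Finset.prod_congr rfl fun i _ => ?_
  rw [← pow_mul, ← pow_add, add_comm]

end

theorem mem_subgroup_jk_general {p : ℕ} {G : Type*} [CommGroup G]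
    {r : ℕ} (α : Fin r → G) (n : Fin r → ℕ)
    (j j' k' k : ℕ) (hjj' : j ≤ j') (hj'k' : j' < k')
    (β : G) (hβ : ∃ b : G, b ^ p ^ k = 1 ∧ b ^ p ^ j = β)
    (x : Fin r → ℤ)
    (hx : ∏ i, (α i ^ p ^ (k' + (n i - k))) ^ x i = β ^ p ^ (k' - j)) :
    ∃ b : G, b ^ p ^ k' = 1 ∧
      b ^ p ^ j' = β ^ p ^ (j' - j) * (∏ i, (α i ^ p ^ (j' + (n i - k))) ^ x i)⁻¹ := by
  obtain ⟨b, -, rfl⟩ := hβ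
  set δ := ∏ i, (α i ^ p ^ (n i - k)) ^ x i
  have hδ (m : ℕ) : δ ^ p ^ m = ∏ i, (α i ^ p ^ (m + (n i - k))) ^ x i :=
    Finset.prod_zpow_pow_prime_pow _ _ _ _ _ _
  have hbδ : b ^ p ^ k' = δ ^ p ^ k' := by
    rw [hδ, hx, pow_pow_pow_sub (hjj'.trans hj'k'.le)]
  refine ⟨b / δ, ?_, ?_⟩
  · rw [div_pow, hbδ, div_self']
  · rw [div_pow, hδ, pow_pow_pow_sub hjj', div_eq_mul_inv]

/-- Lemma 2(i) of the paper: for `0 ≤ j ≤ j' < k' ≤ k`,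
`β ∈ G(j,k)` and an integer vector `x` with `α(k',k)^x = β^{p^{k'-j}}`,
the element `γ = β^{p^{j'-j}} ⬝ α(j',k)^{-x}` lies in `G(j',k')`, where
`α(j,k) i = α i ^ p ^ (j + max 0 (n i - k))`. -/
theorem mem_subgroup_jk {p : ℕ} (hp : p.Prime) {G : Type*} [CommGroup G]
    [Fintype G] (hG : IsPGroup p G) {r : ℕ} (α : Fin r → G) (n : Fin r → ℕ)
    (hord : ∀ i, orderOf (α i) = p ^ n i)
    (hα : IsBasis α (⊤ : Subgroup G))
    (j j' k' k : ℕ) (hjj' : j ≤ j') (hj'k' : j' < k') (hk'k : k' ≤ k)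
    (β : G) (hβ : ∃ b : G, b ^ p ^ k = 1 ∧ b ^ p ^ j = β)
    (x : Fin r → ℤ)
    (hx : ∏ i, (α i ^ p ^ (k' + (n i - k))) ^ x i = β ^ p ^ (k' - j)) :
    ∃ b : G, b ^ p ^ k' = 1 ∧
      b ^ p ^ j' = β ^ p ^ (j' - j) * (∏ i, (α i ^ p ^ (j' + (n i - k))) ^ x i)⁻¹ :=
  mem_subgroup_jk_general α n j j' k' k hjj' hj'k' β hβ x hx
end

section
/- Let p be a prime, let α be a basis for a finite abelian p-group G, and let j, j', k', k be integers with 0 ≤ j ≤ j' < k' ≤ k. Let β ∈ G(j,k), let x be an integer vector with α(k',k)^x = β^{p^{k'−j}}, and set γ = β^{p^{j'−j}} · α(j',k)^{−x}. Then each component of q(j',k) divides the corresponding component of q(j',k'), so s := q(j',k')/q(j',k) (componentwise quotient) is an integer vector; and if v is an integer vector with α(j',k')^v = γ, then α(j',k)^{s·v + x} = β^{p^{j'−j}}, where s·v denotes the componentwise product. -/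
theorem zpow_natCast_div_mul_add {G : Type*} [Group G] (g : G) {m m' : ℕ} (h : m ∣ m')
    (v x : ℤ) :
    (g ^ m) ^ (((m' / m : ℕ) : ℤ) * v + x) = (g ^ m') ^ v * (g ^ m) ^ x := by
  rw [zpow_add, zpow_mul, zpow_natCast, ← pow_mul, Nat.mul_div_cancel' h]

theorem dl_recombination_general {p : ℕ} {G : Type*} [CommGroup G]
    {r : ℕ} (α : Fin r → G) (n : Fin r → ℕ)
    (j j' k' k : ℕ) (hk'k : k' ≤ k)
    (β : G)
    (x : Fin r → ℤ) :
    (∀ i, p ^ (j' + (n i - k)) ∣ p ^ (j' + (n i - k'))) ∧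
      ∀ v : Fin r → ℤ,
        ∏ i, (α i ^ p ^ (j' + (n i - k'))) ^ v i
            = β ^ p ^ (j' - j) * (∏ i, (α i ^ p ^ (j' + (n i - k))) ^ x i)⁻¹ →
        ∏ i, (α i ^ p ^ (j' + (n i - k))) ^
            (((p ^ (j' + (n i - k')) / p ^ (j' + (n i - k)) : ℕ) : ℤ) * v i + x i)
          = β ^ p ^ (j' - j) := by
  have hdvd (i : Fin r) : p ^ (j' + (n i - k)) ∣ p ^ (j' + (n i - k')) :=
    pow_dvd_pow p (by omega)
  refine ⟨hdvd, fun v hv => ?_⟩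
  simp only [zpow_natCast_div_mul_add _ (hdvd _), Finset.prod_mul_distrib, hv,
    inv_mul_cancel_right]

/-- Lemma 2(ii) of the paper: with `q(j,k) i = p ^ (j + max 0 (n i - k))`
and `α(j,k) i = α i ^ q(j,k) i`, each component of `q(j',k)` divides the corresponding
component of `q(j',k')`, so `s = q(j',k')/q(j',k)` is an integer vector; and if
`α(k',k)^x = β^{p^{k'-j}}`, `γ = β^{p^{j'-j}} ⬝ α(j',k)^{-x}` and `α(j',k')^v = γ`,
then `α(j',k)^{s·v + x} = β^{p^{j'-j}}`. -/
theorem dl_recombination {p : ℕ} (hp : p.Prime) {G : Type*} [CommGroup G]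
    [Fintype G] (hG : IsPGroup p G) {r : ℕ} (α : Fin r → G) (n : Fin r → ℕ)
    (hord : ∀ i, orderOf (α i) = p ^ n i)
    (hα : IsBasis α (⊤ : Subgroup G))
    (j j' k' k : ℕ) (hjj' : j ≤ j') (hj'k' : j' < k') (hk'k : k' ≤ k)
    (β : G) (hβ : ∃ b : G, b ^ p ^ k = 1 ∧ b ^ p ^ j = β)
    (x : Fin r → ℤ)
    (hx : ∏ i, (α i ^ p ^ (k' + (n i - k))) ^ x i = β ^ p ^ (k' - j)) :
    (∀ i, p ^ (j' + (n i - k)) ∣ p ^ (j' + (n i - k'))) ∧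
      ∀ v : Fin r → ℤ,
        ∏ i, (α i ^ p ^ (j' + (n i - k'))) ^ v i
            = β ^ p ^ (j' - j) * (∏ i, (α i ^ p ^ (j' + (n i - k))) ^ x i)⁻¹ →
        ∏ i, (α i ^ p ^ (j' + (n i - k))) ^
            (((p ^ (j' + (n i - k')) / p ^ (j' + (n i - k)) : ℕ) : ℤ) * v i + x i)
          = β ^ p ^ (j' - j) :=
  dl_recombination_general α n j j' k' k hk'k β x
end

section
/- Let p be a prime and let α = (α₁, …, α_r) be a basis for a subgroup of a finite abelian p-group G, with ord(α_i) = p^{n_i} and m = max_i n_i. Let β ∈ G with ord(β) ≤ p^m. Let h be the least integer in {0, 1, …, m} for which there exists an integer vector x with β^{p^h} = (α₁^{x₁} ⋯ α_r^{x_r})^{p^h} (such h exists, since h = m works with x = 0), and let x be such a vector for this minimal h (taking x = 0 when h = m). Then γ := β · α^{−x} has order exactly p^h. -/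
theorem orderOf_eq_prime_pow_of_forall_lt {M : Type*} [Monoid M] {p : ℕ} (hp : p.Prime)
    {g : M} {h : ℕ} (hg : g ^ p ^ h = 1) (hlt : ∀ k < h, g ^ p ^ k ≠ 1) :
    orderOf g = p ^ h := by
  cases h with
  | zero => simpa using hg
  | succ k =>
    have := Fact.mk hp
    exact orderOf_eq_prime_pow (hlt k k.lt_succ_self) hg

theorem order_of_reduced_element_general {p : ℕ} (hp : p.Prime) {G : Type*} [CommGroup G]
    {r : ℕ} (α : Fin r → G) (β : G) (h : ℕ) (x : Fin r → ℤ)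
    (hx : β ^ p ^ h = (∏ i, α i ^ x i) ^ p ^ h)
    (hmin : ∀ h' < h, ¬ ∃ y : Fin r → ℤ, β ^ p ^ h' = (∏ i, α i ^ y i) ^ p ^ h') :
    orderOf (β * (∏ i, α i ^ x i)⁻¹) = p ^ h := by
  simp only [← div_eq_mul_inv]
  refine orderOf_eq_prime_pow_of_forall_lt hp ?_ fun k hk hγ => hmin k hk ⟨x, ?_⟩
  · rw [div_pow, hx, div_self']
  · rwa [div_pow, div_eq_one] at hγ

/-- Lemma 5(i) of the paper: if `h ≤ m` is the least integer for
which there is an integer vector `x` with `β^{p^h} = (α^x)^{p^h}` (taking `x = 0`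
when `h = m`), and `ord β ≤ p^m` where `p^m = max orderOf (α i)`, then
`γ = β ⬝ α^{-x}` has order exactly `p^h`. -/
theorem order_of_reduced_element {p : ℕ} (hp : p.Prime) {G : Type*} [CommGroup G]
    [Fintype G] (hG : IsPGroup p G) {r : ℕ} (α : Fin r → G)
    (hα : IsBasis α (Subgroup.closure (Set.range α)))
    (n : Fin r → ℕ) (hord : ∀ i, orderOf (α i) = p ^ n i)
    (m : ℕ) (hm : IsGreatest (Set.range n) m)
    (β : G) (hβ : orderOf β ≤ p ^ m)
    (h : ℕ) (hhm : h ≤ m)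
    (x : Fin r → ℤ)
    (hx : β ^ p ^ h = (∏ i, α i ^ x i) ^ p ^ h)
    (hmin : ∀ h' < h, ¬ ∃ y : Fin r → ℤ, β ^ p ^ h' = (∏ i, α i ^ y i) ^ p ^ h')
    (hx0 : h = m → x = 0) :
    orderOf (β * (∏ i, α i ^ x i)⁻¹) = p ^ h :=
  order_of_reduced_element_general hp α β h x hx hmin
end

section
/- Let p be a prime, let α = (α₁, …, α_r) be a basis for a subgroup of a finite abelian p-group G, let β ∈ G, let x be an integer vector, and set γ = β · α^{−x}. Suppose ord(γ) = p^h and that for every integer h' with 0 ≤ h' < h there is no integer vector y with β^{p^{h'}} = (α₁^{y₁} ⋯ α_r^{y_r})^{p^{h'}}. Let α' be the subtuple of α consisting of those components α_i with ord(α_i) ≥ ord(γ). Then the tuple obtained by appending γ to α' is a basis for the subgroup generated by the components of α' together with γ. -/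
open Subgroup Set

section Independence

variable {G : Type*} [CommGroup G] {ι : Type*} [Fintype ι]

def ZPowIndependent (δ : ι → G) : Prop :=
  ∀ z : ι → ℤ, ∏ i, δ i ^ z i = 1 → ∀ i, δ i ^ z i = 1

theorem exists_pow_eq_zpow_of_lt_orderOf [Finite G] (g : G) (z : ℤ) :
    ∃ n < orderOf g, g ^ n = g ^ z := by
  obtain ⟨n, hn⟩ := (isOfFinOrder_of_finite g).mem_powers_iff_mem_zpowers.2 (zpow_mem_zpowers g z)
  exact ⟨n % orderOf g, Nat.mod_lt _ (orderOf_pos g), by rw [pow_mod_orderOf]; exact hn⟩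

theorem isBasis_closure_range_iff [Finite G] {δ : ι → G} :
    IsBasis δ (closure (range δ)) ↔ ZPowIndependent δ := by
  constructor
  · rintro ⟨-, huniq⟩ z hz i
    choose n hn hnz using fun i => exists_pow_eq_zpow_of_lt_orderOf (δ i) (z i)
    have hn0 : n = 0 :=
      (huniq 1 (one_mem _)).unique ⟨hn, by simp only [hnz, hz]⟩
        ⟨fun i => orderOf_pos (δ i), by simp⟩
    rw [← hnz, hn0, Pi.zero_apply, pow_zero]
  · intro hδ
    refine ⟨rfl, fun β hβ => ?_⟩
    obtain ⟨z, rfl⟩ := exists_of_mem_closure_range δ β hβ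
    choose n hn hnz using fun i => exists_pow_eq_zpow_of_lt_orderOf (δ i) (z i)
    refine ⟨n, ⟨hn, by simp only [hnz]⟩, fun m ⟨hm, hmz⟩ => funext fun i => ?_⟩
    have hrel : ∏ i, δ i ^ ((m i : ℤ) - n i) = 1 := by
      simp only [zpow_sub, zpow_natCast, Finset.prod_mul_distrib, Finset.prod_inv_distrib, hmz,
        hnz, mul_inv_cancel]
    have hmn := hδ _ hrel i
    rw [zpow_sub, zpow_natCast, zpow_natCast, mul_inv_eq_one] at hmn
    exact pow_injOn_Iio_orderOf (hm i) (hn i) hmn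

theorem ZPowIndependent.comp_injective {κ : Type*} [Fintype κ] {δ : ι → G}
    (hδ : ZPowIndependent δ) {e : κ → ι} (he : e.Injective) : ZPowIndependent (δ ∘ e) := by
  intro z hz k
  have hext : ∏ i, δ i ^ e.extend z 0 i = 1 := by
    rw [← hz]
    refine (Fintype.prod_of_injective e he _ _ (fun i hi => ?_) fun k => ?_).symm
    · rw [Function.extend_apply' _ _ _ hi, Pi.zero_apply, zpow_zero]
    · rw [Function.comp_apply, he.extend_apply]
  simpa only [Function.comp_apply, he.extend_apply] using hδ _ hext (e k)

theorem ZPowIndependent.option_elim {κ : Type*} [Fintype κ] {δ : κ → G} {γ : G}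
    (hδ : ZPowIndependent δ) (hγ : ∀ c : ℤ, γ ^ c ∈ closure (range δ) → γ ^ c = 1) :
    ZPowIndependent fun o : Option κ => o.elim γ δ := by
  intro z hz
  simp only [Fintype.prod_option, Option.elim] at hz
  have hγz : γ ^ z none = 1 := by
    refine hγ _ ?_
    rw [eq_inv_of_mul_eq_one_left hz]
    exact inv_mem (prod_mem fun k _ => zpow_mem (subset_closure (mem_range_self k)) _)
  rw [hγz, one_mul] at hz
  rintro (_ | k)
  exacts [hγz, hδ _ hz k]

end Independence

theorem zpow_gcd_orderOf_mem {G : Type*} [Group G] {K : Subgroup G} {g : G} {c : ℤ}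
    (hc : g ^ c ∈ K) : g ^ (Int.gcd c (orderOf g) : ℤ) ∈ K := by
  rw [Int.gcd_eq_gcd_ab, zpow_add, zpow_mul g (orderOf g : ℤ), zpow_natCast, pow_orderOf_eq_one,
    one_zpow, mul_one, zpow_mul]
  exact zpow_mem hc _

theorem IsPGroup.exists_zpow_eq_pow_of_pow_eq_one {p : ℕ} (hp : p.Prime) {G : Type*} [Group G]
    (hG : IsPGroup p G) {a : G} {i j : ℕ} (ha : p ^ (j + i) ≤ orderOf a) {e : ℤ}
    (he : (a ^ e) ^ p ^ i = 1) : ∃ f : ℤ, a ^ e = (a ^ f) ^ p ^ j := by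
  have : Fact p.Prime := ⟨hp⟩
  obtain ⟨k, hk⟩ := IsPGroup.iff_orderOf.1 hG a
  rw [hk, Nat.pow_le_pow_iff_right hp.one_lt] at ha
  have hdvd : (p : ℤ) ^ j * (p : ℤ) ^ i ∣ e * (p : ℤ) ^ i := by
    rw [← pow_add]
    refine (pow_dvd_pow _ ha).trans ?_
    exact_mod_cast hk ▸ orderOf_dvd_iff_zpow_eq_one.2 (by rwa [zpow_mul, zpow_natCast])
  obtain ⟨f, rfl⟩ := (mul_dvd_mul_iff_right (pow_ne_zero _ (by exact_mod_cast hp.ne_zero))).1 hdvd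
  exact ⟨f, by rw [← zpow_natCast, ← zpow_mul, mul_comm]; push_cast; rfl⟩

section Subtuple

variable {p : ℕ} (hp : p.Prime) {G : Type*} [CommGroup G] (hG : IsPGroup p G) {ι : Type*}
  [Fintype ι] {α : ι → G} (hα : ZPowIndependent α) {γ : G} {h : ℕ} (hγ : orderOf γ = p ^ h)
include hp hG hα hγ

theorem exists_pow_eq_pow_of_pow_mem_closure_subtuple {j : ℕ} (hj : j ≤ h)
    (hmem : γ ^ p ^ j ∈ closure (range fun s : {i // orderOf γ ≤ orderOf (α i)} => α s)) :
    ∃ g ∈ closure (range α), γ ^ p ^ j = g ^ p ^ j := by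
  classical
  obtain ⟨e, he⟩ := exists_of_mem_closure_range _ _ hmem
  have hkill : ∀ s : {i // orderOf γ ≤ orderOf (α i)}, (α s ^ e s) ^ p ^ (h - j) = 1 := by
    have hprod : ∏ s : {i // orderOf γ ≤ orderOf (α i)}, (α s ^ e s) ^ p ^ (h - j) = 1 := by
      rw [Finset.prod_pow, ← he, ← pow_mul, ← pow_add, Nat.add_sub_cancel' hj, ← hγ,
        pow_orderOf_eq_one]
    intro s
    simpa only [Function.comp_apply, zpow_mul, zpow_natCast] using
      hα.comp_injective Subtype.val_injective (fun s => e s * (p ^ (h - j) : ℕ))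
        (by simpa only [Function.comp_apply, zpow_mul, zpow_natCast] using hprod) s
  have hord (s : {i // orderOf γ ≤ orderOf (α i)}) : p ^ (j + (h - j)) ≤ orderOf (α s) := by
    rw [Nat.add_sub_cancel' hj, ← hγ]
    exact s.2
  choose f hf using fun s => hG.exists_zpow_eq_pow_of_pow_eq_one hp (hord s) (hkill s)
  refine ⟨∏ s, α s.1 ^ f s, prod_mem fun s _ => zpow_mem (subset_closure (mem_range_self _)) _, ?_⟩
  rw [he, ← Finset.prod_pow]
  exact Finset.prod_congr rfl fun s _ => hf s

theorem zpow_eq_one_of_mem_closure_subtuple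
    (hmin : ∀ j < h, ∀ g ∈ closure (range α), γ ^ p ^ j ≠ g ^ p ^ j) (c : ℤ)
    (hc : γ ^ c ∈ closure (range fun s : {i // orderOf γ ≤ orderOf (α i)} => α s)) :
    γ ^ c = 1 := by
  have hgcd : Int.gcd c (orderOf γ) ∣ p ^ h := by
    simpa only [Int.natAbs_natCast, hγ] using Int.gcd_dvd_natAbs_right c (orderOf γ)
  obtain ⟨j, hj, hjeq⟩ := (Nat.dvd_prime_pow hp).1 hgcd
  rcases hj.lt_or_eq with hlt | rfl
  · have hmem := zpow_gcd_orderOf_mem hc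
    rw [hjeq, zpow_natCast] at hmem
    obtain ⟨g, hg, hγg⟩ := exists_pow_eq_pow_of_pow_mem_closure_subtuple hp hG hα hγ hj hmem
    exact absurd hγg (hmin j hlt g hg)
  · rw [← orderOf_dvd_iff_zpow_eq_one, hγ, ← hjeq]
    exact Int.gcd_dvd_left c _

end Subtuple

/-- corollary to Lemma 5 used in Algorithm 5: if `γ = β ⬝ α^{-x}`
has order `p^h` and no integer vector `y` satisfies `β^{p^{h'}} = (α^y)^{p^{h'}}`
for any `h' < h`, then appending `γ` to the subtuple `α'` of components `α i` with
`orderOf (α i) ≥ orderOf γ` yields a basis for the subgroup generated by `α'` and `γ`. -/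
theorem append_to_subtuple_isBasis {p : ℕ} (hp : p.Prime) {G : Type*} [CommGroup G]
    [Fintype G] (hG : IsPGroup p G) {r : ℕ} (α : Fin r → G)
    (hα : IsBasis α (Subgroup.closure (Set.range α)))
    (β : G) (x : Fin r → ℤ) (h : ℕ)
    (hγord : orderOf (β * (∏ i, α i ^ x i)⁻¹) = p ^ h)
    (hmin : ∀ h' < h, ¬ ∃ y : Fin r → ℤ, β ^ p ^ h' = (∏ i, α i ^ y i) ^ p ^ h') :
    IsBasis
      (fun o : Option {i : Fin r //
          orderOf (β * (∏ i, α i ^ x i)⁻¹) ≤ orderOf (α i)} =>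
        o.elim (β * (∏ i, α i ^ x i)⁻¹) fun i => α i.1)
      (Subgroup.closure (Set.range
        (fun o : Option {i : Fin r //
            orderOf (β * (∏ i, α i ^ x i)⁻¹) ≤ orderOf (α i)} =>
          o.elim (β * (∏ i, α i ^ x i)⁻¹) fun i => α i.1))) := by
  set γ := β * (∏ i, α i ^ x i)⁻¹ with hγ
  have hαind := isBasis_closure_range_iff.1 hα
  have hminγ : ∀ j < h, ∀ g ∈ closure (range α), γ ^ p ^ j ≠ g ^ p ^ j := by
    intro j hj g hg hγg
    have hαx : ∏ i, α i ^ x i ∈ closure (range α) := mem_closure_range_iff_of_fintype.2 ⟨x, rfl⟩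
    obtain ⟨y, hy⟩ := exists_of_mem_closure_range α _ (mul_mem hg hαx)
    refine hmin j hj ⟨y, ?_⟩
    rw [← hy, mul_pow, ← hγg, ← mul_pow, hγ, inv_mul_cancel_right]
  exact isBasis_closure_range_iff.2 <| (hαind.comp_injective Subtype.val_injective).option_elim
    (zpow_eq_one_of_mem_closure_subtuple hp hG hαind hγord hminγ)
end

section
/- For every real number a > 1, every integer n ≥ 1, and all real numbers x₁, …, x_n with each x_i ≥ a, one has ∑_{i=1}^n x_i ≤ c · ∏_{i=1}^n x_i, where c = a/e^{1 + ln ln a} = a/(e · ln a). -/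
/-! Bounding every factor but one from below by `a` gives `a ^ n * x i ≤ a * ∏ x`, hence
`a ^ n * ∑ x ≤ n * a * ∏ x`; and `e * n * ln a ≤ a ^ n` is `e * t ≤ exp t` at `t = n * ln a`. -/

open Finset

lemma Finset.pow_card_mul_le_mul_prod {ι R : Type*} [CommSemiring R] [PartialOrder R]
    [IsOrderedRing R] {s : Finset ι} {f : ι → R} {a : R} (ha : 0 ≤ a)
    (hf : ∀ j ∈ s, a ≤ f j) {i : ι} (hi : i ∈ s) :
    a ^ #s * f i ≤ a * ∏ j ∈ s, f j := by
  classical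
  have hrest : a ^ #(s.erase i) ≤ ∏ j ∈ s.erase i, f j := by
    rw [← prod_const]
    exact prod_le_prod (fun _ _ => ha) fun j hj => hf j (mem_of_mem_erase hj)
  calc a ^ #s * f i = a * (f i * a ^ #(s.erase i)) := by
        rw [← card_erase_add_one hi, pow_succ]; ring
    _ ≤ a * (f i * ∏ j ∈ s.erase i, f j) := by
        gcongr
        exact ha.trans (hf i hi)
    _ = a * ∏ j ∈ s, f j := by rw [mul_prod_erase s f hi]

lemma Finset.pow_card_mul_sum_le {ι R : Type*} [CommSemiring R] [PartialOrder R]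
    [IsOrderedRing R] {s : Finset ι} {f : ι → R} {a : R} (ha : 0 ≤ a)
    (hf : ∀ j ∈ s, a ≤ f j) :
    a ^ #s * ∑ i ∈ s, f i ≤ #s * (a * ∏ j ∈ s, f j) := by
  rw [mul_sum, ← nsmul_eq_mul, ← sum_const]
  exact sum_le_sum fun i hi => pow_card_mul_le_mul_prod ha hf hi

lemma Real.exp_one_mul_nat_mul_log_le_pow {a : ℝ} (ha : 0 < a) (n : ℕ) :
    Real.exp 1 * (n * Real.log a) ≤ a ^ n := by
  simpa [Real.exp_nat_mul, Real.exp_log ha] using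
    Real.exp_one_mul_le_exp (x := n * Real.log a)

theorem sum_le_const_mul_prod_general (a : ℝ) (ha : 1 < a) (n : ℕ)
    (x : Fin n → ℝ) (hx : ∀ i, a ≤ x i) :
    ∑ i, x i ≤ a / (Real.exp 1 * Real.log a) * ∏ i, x i := by
  have ha₀ : 0 ≤ a := by linarith
  have hA : 0 < Real.exp 1 * Real.log a := mul_pos (Real.exp_pos 1) (Real.log_pos ha)
  have hN : 0 < a ^ n := by positivity
  have hsum : a ^ n * ∑ i, x i ≤ n * (a * ∏ i, x i) := by
    simpa using pow_card_mul_sum_le (s := univ) ha₀ fun i _ => hx i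
  have hpow : Real.exp 1 * Real.log a * n ≤ a ^ n := by
    linarith [Real.exp_one_mul_nat_mul_log_le_pow (by linarith : 0 < a) n]
  have hP : 0 ≤ a * ∏ i, x i := mul_nonneg ha₀ (prod_nonneg fun i _ => ha₀.trans (hx i))
  rw [div_mul_eq_mul_div, le_div_iff₀ hA]
  refine le_of_mul_le_mul_left ?_ hN
  calc a ^ n * ((∑ i, x i) * (Real.exp 1 * Real.log a))
      = (Real.exp 1 * Real.log a) * (a ^ n * ∑ i, x i) := by ring
    _ ≤ (Real.exp 1 * Real.log a) * (n * (a * ∏ i, x i)) := by gcongr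
    _ = (Real.exp 1 * Real.log a * n) * (a * ∏ i, x i) := by ring
    _ ≤ a ^ n * (a * ∏ i, x i) := by gcongr

/-- Appendix lemma: for every real `a > 1` and all reals
`x₁, …, x_n ≥ a` (with `n ≥ 1`), `∑ x i ≤ c ⬝ ∏ x i` where
`c = a / e^{1 + ln ln a} = a / (e ⬝ ln a)`. -/
theorem sum_le_const_mul_prod (a : ℝ) (ha : 1 < a) (n : ℕ) (hn : 1 ≤ n)
    (x : Fin n → ℝ) (hx : ∀ i, a ≤ x i) :
    ∑ i, x i ≤ a / (Real.exp 1 * Real.log a) * ∏ i, x i :=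
  sum_le_const_mul_prod_general a ha n x hx
end

section
/- Let a > 1 be a real number and define g(t) = t · a^{1−t} for real t ≥ 0 (so g(0) = 0). Then the supremum of (∑_{i=1}^n x_i)/(∏_{i=1}^n x_i) over all integers n ≥ 1 and all real numbers x₁, …, x_n ≥ a equals max(g(⌊1/ln a⌋), g(⌈1/ln a⌉)); this value equals the maximum of g(n) = n·a^{1−n} over positive integers n, and it is attained (by taking n a maximizing positive integer and all x_i = a). -/
/-!
As every `x_j ≥ a > 0`, each quotient `x_i / ∏ x_j = 1 / ∏_{j ≠ i} x_j` is at most `a^{1-n}`,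
so the ratio is at most `n a^{1-n} = g n`, with equality for the constant tuple `a`.
It remains to maximise `g` over positive integers: `g' t = a^{1-t} (1 - t ln a)`, so `g` increases up
to `1 / ln a` and decreases after it, and the best integer is `⌊1 / ln a⌋` or `⌈1 / ln a⌉`
(the floor may be `0`, where `g` vanishes, but then the ceiling wins).
-/

open Real Set

/-- `g a t = t ⬝ a^{1-t}`, where `a^{1-t}` is the real power `e^{(1-t) ln a}`. -/
noncomputable def g (a t : ℝ) : ℝ := t * a ^ (1 - t)

section Calculus

variable {a : ℝ}

lemma hasDerivAt_g (ha : 0 < a) (t : ℝ) :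
    HasDerivAt (g a) (a ^ (1 - t) * (1 - t * log a)) t := by
  have hg : g a = fun t => t * exp ((1 - t) * log a) := by
    funext t
    rw [g, rpow_def_of_pos ha, mul_comm (log a)]
  have hexp : HasDerivAt (fun t => (1 - t) * log a) (-log a) t := by
    simpa using ((hasDerivAt_id t).const_sub 1).mul_const (log a)
  rw [hg, rpow_def_of_pos ha, mul_comm (log a)]
  exact ((hasDerivAt_id t).mul hexp.exp).congr_deriv (by simp only [id]; ring)

lemma continuous_g (ha : 0 < a) : Continuous (g a) :=
  continuous_iff_continuousAt.2 fun t => (hasDerivAt_g ha t).continuousAt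

lemma monotoneOn_g (ha : 1 < a) : MonotoneOn (g a) (Iic (1 / log a)) := by
  have ha0 : 0 < a := by linarith
  refine monotoneOn_of_hasDerivWithinAt_nonneg (convex_Iic _) (continuous_g ha0).continuousOn
    (fun t _ => (hasDerivAt_g ha0 t).hasDerivWithinAt) fun t ht => ?_
  rw [interior_Iic, mem_Iio, lt_div_iff₀ (log_pos ha)] at ht
  exact mul_nonneg (rpow_nonneg ha0.le _) (by linarith)

lemma antitoneOn_g (ha : 1 < a) : AntitoneOn (g a) (Ici (1 / log a)) := by
  have ha0 : 0 < a := by linarith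
  refine antitoneOn_of_hasDerivWithinAt_nonpos (convex_Ici _) (continuous_g ha0).continuousOn
    (fun t _ => (hasDerivAt_g ha0 t).hasDerivWithinAt) fun t ht => ?_
  rw [interior_Ici, mem_Ioi, div_lt_iff₀ (log_pos ha)] at ht
  exact mul_nonpos_of_nonneg_of_nonpos (rpow_nonneg ha0.le _) (by linarith)

end Calculus

section Integers

variable {a : ℝ}

lemma g_natCast (ha : 0 < a) (n : ℕ) : g a n = n * a / a ^ n := by
  rw [g, sub_eq_add_neg, rpow_add ha, rpow_one, rpow_neg ha.le, rpow_natCast]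
  ring

lemma g_natCast_le_max_floor_ceil (ha : 1 < a) (n : ℕ) :
    g a n ≤ max (g a (⌊1 / log a⌋₊ : ℕ)) (g a (⌈1 / log a⌉₊ : ℕ)) := by
  have ht : 0 ≤ 1 / log a := (one_div_pos.2 (log_pos ha)).le
  rcases le_or_gt n ⌊1 / log a⌋₊ with hn | hn
  · have hfloor : (⌊1 / log a⌋₊ : ℝ) ≤ 1 / log a := Nat.floor_le ht
    exact le_max_of_le_left <| monotoneOn_g ha (le_trans (by exact_mod_cast hn) hfloor) hfloor
      (by exact_mod_cast hn)
  · have hceil : 1 / log a ≤ (⌈1 / log a⌉₊ : ℝ) := Nat.le_ceil _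
    have hn' : ⌈1 / log a⌉₊ ≤ n := (Nat.ceil_le_floor_add_one _).trans hn
    exact le_max_of_le_right <| antitoneOn_g ha hceil (hceil.trans (by exact_mod_cast hn'))
      (by exact_mod_cast hn')

lemma exists_pos_g_natCast_eq_max_floor_ceil (ha : 1 < a) :
    ∃ n : ℕ, 1 ≤ n ∧ g a n = max (g a (⌊1 / log a⌋₊ : ℕ)) (g a (⌈1 / log a⌉₊ : ℕ)) := by
  have hceil : 1 ≤ ⌈1 / log a⌉₊ := Nat.one_le_ceil_iff.2 (one_div_pos.2 (log_pos ha))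
  rcases Nat.eq_zero_or_pos ⌊1 / log a⌋₊ with hfloor | hfloor
  · refine ⟨_, hceil, (max_eq_right ?_).symm⟩
    have : (0 : ℝ) < ⌈1 / log a⌉₊ := by exact_mod_cast hceil
    rw [hfloor, Nat.cast_zero, g, zero_mul, g]
    positivity
  · rcases le_total (g a (⌊1 / log a⌋₊ : ℕ)) (g a (⌈1 / log a⌉₊ : ℕ)) with h | h
    · exact ⟨_, hceil, (max_eq_right h).symm⟩
    · exact ⟨_, hfloor, (max_eq_left h).symm⟩

end Integers

section Ratio

variable {ι : Type*} [Fintype ι] {a : ℝ} {x : ι → ℝ}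

lemma div_prod_le_div_pow (ha : 0 < a) (hx : ∀ i, a ≤ x i) (i : ι) :
    x i / ∏ j, x j ≤ a / a ^ Fintype.card ι := by
  classical
  have hxi : 0 < x i := ha.trans_le (hx i)
  have hrest : a ^ (Fintype.card ι - 1) ≤ ∏ j ∈ Finset.univ.erase i, x j := by
    calc a ^ (Fintype.card ι - 1) = ∏ _j ∈ Finset.univ.erase i, a := by
          rw [Finset.prod_const, Finset.card_erase_of_mem (Finset.mem_univ i), Finset.card_univ]
      _ ≤ ∏ j ∈ Finset.univ.erase i, x j :=
          Finset.prod_le_prod (fun _ _ => ha.le) fun j _ => hx j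
  have hcard : a ^ Fintype.card ι = a * a ^ (Fintype.card ι - 1) := by
    rw [← pow_succ', Nat.sub_add_cancel (Fintype.card_pos_iff.2 ⟨i⟩)]
  rw [← Finset.mul_prod_erase _ _ (Finset.mem_univ i), hcard,
    div_le_div_iff₀ (mul_pos hxi ((by positivity : (0 : ℝ) < _).trans_le hrest))
    (by positivity)]
  calc x i * (a * a ^ (Fintype.card ι - 1)) = a * (x i * a ^ (Fintype.card ι - 1)) := by ring
    _ ≤ a * (x i * ∏ j ∈ Finset.univ.erase i, x j) := by gcongr

lemma sum_div_prod_le_g (ha : 0 < a) (hx : ∀ i, a ≤ x i) :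
    (∑ i, x i) / ∏ i, x i ≤ g a (Fintype.card ι) := by
  calc (∑ i, x i) / ∏ i, x i = ∑ i, x i / ∏ j, x j := Finset.sum_div _ _ _
    _ ≤ ∑ _i : ι, a / a ^ Fintype.card ι :=
        Finset.sum_le_sum fun i _ => div_prod_le_div_pow ha hx i
    _ = g a (Fintype.card ι) := by
        rw [g_natCast ha, Finset.sum_const, Finset.card_univ, nsmul_eq_mul, mul_div_assoc]

lemma sum_div_prod_const (n : ℕ) :
    (∑ _i : Fin n, a) / ∏ _i : Fin n, a = n * a / a ^ n := by
  rw [Finset.sum_const, Finset.prod_const, Finset.card_univ, Fintype.card_fin, nsmul_eq_mul]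

end Ratio

/-- equation (14) of the paper: for real `a > 1`, the supremum
of `(∑ x i) / (∏ x i)` over all `n ≥ 1` and all reals `x₁, …, x_n ≥ a` is attained
and equals `max (g ⌊1/ln a⌋) (g ⌈1/ln a⌉)`, which is also the maximum of
`g n = n ⬝ a^{1-n}` over positive integers `n`. -/
theorem sup_ratio_eq_max_g (a : ℝ) (ha : 1 < a) :
    IsGreatest
      { y : ℝ | ∃ n : ℕ, 1 ≤ n ∧ ∃ x : Fin n → ℝ,
          (∀ i, a ≤ x i) ∧ y = (∑ i, x i) / ∏ i, x i }
      (max (g a (⌊1 / Real.log a⌋₊ : ℕ)) (g a (⌈1 / Real.log a⌉₊ : ℕ))) ∧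
    IsGreatest { y : ℝ | ∃ n : ℕ, 1 ≤ n ∧ y = g a n }
      (max (g a (⌊1 / Real.log a⌋₊ : ℕ)) (g a (⌈1 / Real.log a⌉₊ : ℕ))) := by
  have ha0 : 0 < a := by linarith
  obtain ⟨n₀, hn₀, hmax⟩ := exists_pos_g_natCast_eq_max_floor_ceil ha
  refine ⟨⟨⟨n₀, hn₀, fun _ => a, fun _ => le_rfl, ?_⟩, ?_⟩,
    ⟨⟨n₀, hn₀, hmax.symm⟩, ?_⟩⟩
  · rw [sum_div_prod_const, ← g_natCast ha0, hmax]
  · rintro y ⟨n, -, x, hx, rfl⟩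
    have := sum_div_prod_le_g ha0 hx
    rw [Fintype.card_fin] at this
    exact this.trans (g_natCast_le_max_floor_ceil ha n)
  · rintro y ⟨n, -, rfl⟩
    exact g_natCast_le_max_floor_ceil ha n
end

section
/- Define f(x) = x · log₂(x+1)/log₂ log₂(x+2) for real x ≥ 1. Then for every finite sequence of positive integers m₁, …, m_j and every positive integer m with m₁ + ⋯ + m_j ≤ m, one has ∑_{i=1}^j f(m_i) ≤ f(m). -/
/-!
Write `f x = x * fRatio x`. Substituting `t = log₂ (x + 1)` turns `fRatio x` into `t / φ t` with
`φ t = log₂ log₂ (2 ^ t + 1)`. With `s = 2 ^ t + 1` one has `φ' t = (s - 1) / (s log s)`, which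
decreases in `s` because `log s ≤ s - 1`; so `φ` is concave on `[0, ∞)`. As `φ 0 = 0`, `φ t / t`
decreases and `fRatio` increases. Hence
`∑ f (mᵢ) = ∑ mᵢ fRatio (mᵢ) ≤ (∑ mᵢ) fRatio m ≤ m fRatio m = f m`.
-/

open Real Set

/-- `f x = x ⬝ log₂(x+1) / log₂ log₂ (x+2)`. -/
noncomputable def f (x : ℝ) : ℝ :=
  x * Real.logb 2 (x + 1) / Real.logb 2 (Real.logb 2 (x + 2))

noncomputable def fRatio (x : ℝ) : ℝ := logb 2 (x + 1) / logb 2 (logb 2 (x + 2))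

noncomputable def phi (t : ℝ) : ℝ := logb 2 (logb 2 (2 ^ t + 1))

lemma f_eq_mul_fRatio (x : ℝ) : f x = x * fRatio x := mul_div_assoc _ _ _

lemma antitoneOn_sub_one_div_mul_log :
    AntitoneOn (fun s : ℝ ↦ (s - 1) / (s * log s)) (Ioi 1) := by
  have hderiv : ∀ s ∈ Ioi (1 : ℝ), HasDerivAt (fun s : ℝ ↦ (s - 1) / (s * log s))
      ((s * log s - (s - 1) * (log s + 1)) / (s * log s) ^ 2) s := by
    intro s (hs : 1 < s)
    have hs0 : s ≠ 0 := by positivity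
    have hslog : s * log s ≠ 0 := (mul_pos (by positivity) (log_pos hs)).ne'
    have hmul : HasDerivAt (fun s : ℝ ↦ s * log s) (log s + 1) s :=
      ((hasDerivAt_id' s).mul (hasDerivAt_log hs0)).congr_deriv (by field_simp)
    exact (((hasDerivAt_id' s).sub_const 1).div hmul hslog).congr_deriv (by ring)
  refine antitoneOn_of_deriv_nonpos (convex_Ioi 1)
    (fun s hs ↦ (hderiv s hs).continuousAt.continuousWithinAt) ?_ ?_
  · rw [interior_Ioi]
    exact fun s hs ↦ (hderiv s hs).differentiableAt.differentiableWithinAt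
  · rw [interior_Ioi]
    intro s hs
    rw [(hderiv s hs).deriv]
    refine div_nonpos_of_nonpos_of_nonneg ?_ (sq_nonneg _)
    -- the numerator is `log s - (s - 1)`
    nlinarith [log_le_sub_one_of_pos (zero_lt_one.trans hs)]

lemma hasDerivAt_phi (t : ℝ) :
    HasDerivAt phi (2 ^ t / ((2 ^ t + 1) * log (2 ^ t + 1))) t := by
  have hpow : 0 < (2 : ℝ) ^ t := rpow_pos_of_pos two_pos t
  have hlog : 0 < log ((2 : ℝ) ^ t + 1) := log_pos (by linarith)
  have hinner : HasDerivAt (fun x : ℝ ↦ (2 : ℝ) ^ x + 1) (2 ^ t * log 2) t :=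
    (hasStrictDerivAt_const_rpow two_pos t).hasDerivAt.add_const 1
  have hlogb : HasDerivAt (fun x : ℝ ↦ log ((2 : ℝ) ^ x + 1) / log 2)
      (2 ^ t * log 2 / (2 ^ t + 1) / log 2) t :=
    (hinner.log (by positivity)).div_const _
  have hphi : phi = fun x : ℝ ↦ log (log ((2 : ℝ) ^ x + 1) / log 2) / log 2 := by
    funext x; simp [phi, logb]
  rw [hphi]
  exact ((hlogb.log (by positivity)).div_const (log 2)).congr_deriv (by field_simp)

lemma concaveOn_phi : ConcaveOn ℝ (Ici 0) phi := by
  refine AntitoneOn.concaveOn_of_deriv (convex_Ici 0)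
    (fun t _ ↦ (hasDerivAt_phi t).continuousAt.continuousWithinAt)
    (fun t _ ↦ (hasDerivAt_phi t).differentiableAt.differentiableWithinAt) ?_
  rw [interior_Ici]
  intro a (ha : 0 < a) b (hb : 0 < b) hab
  have hpow : ∀ t : ℝ, 0 < t → (2 : ℝ) ^ t + 1 ∈ Ioi 1 := fun t ht ↦ by
    simpa using one_pos.trans (one_lt_rpow one_lt_two ht)
  rw [(hasDerivAt_phi a).deriv, (hasDerivAt_phi b).deriv]
  simpa using antitoneOn_sub_one_div_mul_log (hpow a ha) (hpow b hb)
    (by simpa using rpow_le_rpow_of_exponent_le one_le_two hab)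

lemma phi_zero : phi 0 = 0 := by
  norm_num [phi]

lemma phi_pos {t : ℝ} (ht : 0 < t) : 0 < phi t := by
  have h : 1 < logb 2 ((2 : ℝ) ^ t + 1) := by
    rw [lt_logb_iff_rpow_lt one_lt_two (by positivity), rpow_one]
    linarith [one_lt_rpow one_lt_two ht]
  exact logb_pos one_lt_two h

lemma antitoneOn_phi_div_self : AntitoneOn (fun t ↦ phi t / t) (Ioi 0) := by
  intro s (hs : 0 < s) t (ht : 0 < t) hst
  have := concaveOn_phi.neg.secant_mono (self_mem_Ici) hs.le ht.le hs.ne' ht.ne' hst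
  simp only [Pi.neg_apply, phi_zero, neg_zero, sub_zero, neg_div] at this
  linarith

lemma fRatio_eq_div_phi {x : ℝ} (hx : 0 ≤ x) :
    fRatio x = logb 2 (x + 1) / phi (logb 2 (x + 1)) := by
  rw [fRatio, phi, rpow_logb two_pos (by norm_num) (by linarith)]
  ring_nf

lemma fRatio_zero : fRatio 0 = 0 := by
  simp [fRatio]

lemma fRatio_nonneg {x : ℝ} (hx : 0 ≤ x) : 0 ≤ fRatio x := by
  rw [fRatio_eq_div_phi hx]
  rcases (logb_nonneg one_lt_two (by linarith : 1 ≤ x + 1)).eq_or_lt with h | h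
  · rw [← h]; simp
  · exact (div_pos h (phi_pos h)).le

lemma monotoneOn_fRatio : MonotoneOn fRatio (Ici 0) := by
  intro x (hx : 0 ≤ x) y (hy : 0 ≤ y) hxy
  rcases hx.eq_or_lt with rfl | hx
  · rw [fRatio_zero]; exact fRatio_nonneg hy
  have htx : 0 < logb 2 (x + 1) := logb_pos one_lt_two (by linarith)
  have hty : logb 2 (x + 1) ≤ logb 2 (y + 1) :=
    logb_le_logb_of_le one_lt_two (by linarith) (by linarith)
  have hphi := antitoneOn_phi_div_self htx (htx.trans_le hty : 0 < logb 2 (y + 1)) hty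
  rw [fRatio_eq_div_phi hx.le, fRatio_eq_div_phi hy, ← inv_div, ← inv_div (phi _)]
  exact inv_anti₀ (div_pos (phi_pos (htx.trans_le hty)) (htx.trans_le hty)) hphi

theorem sum_f_le_f_of_sum_le {ι : Type*} (s : Finset ι) (x : ι → ℝ)
    (hx : ∀ i ∈ s, 0 ≤ x i) {y : ℝ} (hsum : ∑ i ∈ s, x i ≤ y) : ∑ i ∈ s, f (x i) ≤ f y := by
  have hy : 0 ≤ y := (s.sum_nonneg hx).trans hsum
  calc ∑ i ∈ s, f (x i) = ∑ i ∈ s, x i * fRatio (x i) := by simp only [f_eq_mul_fRatio]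
    _ ≤ ∑ i ∈ s, x i * fRatio y := s.sum_le_sum fun i hi ↦
        mul_le_mul_of_nonneg_left
          (monotoneOn_fRatio (hx i hi) hy ((s.single_le_sum hx hi).trans hsum)) (hx i hi)
    _ = (∑ i ∈ s, x i) * fRatio y := (s.sum_mul ..).symm
    _ ≤ y * fRatio y := mul_le_mul_of_nonneg_right hsum (fRatio_nonneg hy)
    _ = f y := (f_eq_mul_fRatio y).symm

theorem sum_f_le_f_general (j : ℕ) (m' : Fin j → ℕ)
    (m : ℕ) (hsum : ∑ i, m' i ≤ m) :
    ∑ i, f (m' i) ≤ f m :=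
  sum_f_le_f_of_sum_le _ _ (fun i _ ↦ Nat.cast_nonneg _) (by exact_mod_cast hsum)

/-- superadditivity bound used in Proposition 4: for positive
integers `m₁, …, m_j` with `m₁ + ⋯ + m_j ≤ m`, one has `∑ f (m i) ≤ f m`. -/
theorem sum_f_le_f (j : ℕ) (m' : Fin j → ℕ) (hm' : ∀ i, 1 ≤ m' i)
    (m : ℕ) (hm : 1 ≤ m) (hsum : ∑ i, m' i ≤ m) :
    ∑ i, f (m' i) ≤ f m :=
  sum_f_le_f_general j m' m hsum
end

section
/- Let (s_ℓ)_{ℓ ≥ 0} be a sequence of positive integers such that s₀ = 1 and, for every ℓ ≥ 1, setting w_ℓ = ⌈log₂(2·s_ℓ)⌉, one has s_{ℓ−1} = ⌈s_ℓ/w_ℓ⌉ and s_ℓ ≥ 2·s_{ℓ−1}. Then for every ℓ ≥ 1, w_ℓ ≥ ℓ + 1 and s_ℓ ≥ ℓ! (ℓ factorial). -/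
/-!
Unfolding `s ℓ ≥ 2 s (ℓ - 1)` down to `s 0 = 1` gives `s ℓ ≥ 2 ^ ℓ`, hence
`w ℓ = ⌈log₂ (2 s ℓ)⌉ ≥ ℓ + 1`. Since `s (ℓ - 1) = ⌈s ℓ / w ℓ⌉`, we get
`s ℓ > w ℓ (s (ℓ - 1) - 1) ≥ (ℓ + 1) (s (ℓ - 1) - 1)`, and because `s (ℓ - 1) ≥ 2 ^ (ℓ - 1) ≥ ℓ`
this yields `s ℓ ≥ ℓ s (ℓ - 1)`, so `s ℓ ≥ ℓ!`.
-/

open Finset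

lemma prod_range_mul_le_of_mul_le {s f : ℕ → ℕ} (h : ∀ k, f k * s k ≤ s (k + 1)) (n : ℕ) :
    (∏ k ∈ range n, f k) * s 0 ≤ s n := by
  induction n with
  | zero => simp
  | succ n ih =>
    calc (∏ k ∈ range (n + 1), f k) * s 0 = f n * ((∏ k ∈ range n, f k) * s 0) := by
          rw [prod_range_succ]; ring
      _ ≤ f n * s n := Nat.mul_le_mul_left _ ih
      _ ≤ s (n + 1) := h n

lemma succ_le_ceil_logb_two_mul {m n : ℕ} (h : 2 ^ n ≤ m) :
    n + 1 ≤ ⌈Real.logb 2 (2 * (m : ℝ))⌉₊ := by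
  have hm : (2 : ℝ) ^ n ≤ m := by exact_mod_cast h
  have hm0 : (0 : ℝ) < m := lt_of_lt_of_le (by positivity) hm
  have hlog : ((n + 1 : ℕ) : ℝ) ≤ Real.logb 2 (2 * (m : ℝ)) := by
    rw [Real.le_logb_iff_rpow_le one_lt_two (by positivity), Real.rpow_natCast, pow_succ']
    gcongr
  exact (Nat.ceil_natCast (n + 1)).symm.trans_le (Nat.ceil_mono hlog)

lemma mul_pred_ceil_div_lt {a b : ℕ} (ha : 0 < a) : b * (⌈(a : ℝ) / b⌉₊ - 1) < a := by
  rcases Nat.eq_zero_or_pos b with rfl | hb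
  · simpa using ha
  rcases Nat.eq_zero_or_pos ⌈(a : ℝ) / b⌉₊ with hc | hc
  · simpa [hc] using ha
  have hlt : ((⌈(a : ℝ) / b⌉₊ - 1 : ℕ) : ℝ) < a / b := Nat.lt_ceil.mp (by omega)
  rw [lt_div_iff₀ (by exact_mod_cast hb)] at hlt
  rw [mul_comm]
  exact_mod_cast hlt

theorem interval_size_lower_bound_general (s : ℕ → ℕ)
    (h0 : s 0 = 1)
    (hrec : ∀ ℓ, 1 ≤ ℓ →
      s (ℓ - 1) = ⌈(s ℓ : ℝ) / (⌈Real.logb 2 (2 * (s ℓ : ℝ))⌉₊ : ℝ)⌉₊ ∧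
        2 * s (ℓ - 1) ≤ s ℓ)
    (ℓ : ℕ) :
    ℓ + 1 ≤ ⌈Real.logb 2 (2 * (s ℓ : ℝ))⌉₊ ∧ Nat.factorial ℓ ≤ s ℓ := by
  have hrec' (k : ℕ) := hrec (k + 1) k.succ_pos
  simp only [Nat.add_sub_cancel] at hrec'
  have hpow (n : ℕ) : 2 ^ n ≤ s n := by
    simpa [h0] using prod_range_mul_le_of_mul_le (f := fun _ ↦ 2) (fun k ↦ (hrec' k).2) n
  have hw (n : ℕ) := succ_le_ceil_logb_two_mul (hpow n)
  have hstep (k : ℕ) : (k + 1) * s k ≤ s (k + 1) := by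
    have hlt := mul_pred_ceil_div_lt (b := ⌈Real.logb 2 (2 * (s (k + 1) : ℝ))⌉₊)
      ((Nat.two_pow_pos (k + 1)).trans_le (hpow (k + 1)))
    rw [← (hrec' k).1] at hlt
    have hwk : (k + 2) * (s k - 1) ≤ _ * (s k - 1) := Nat.mul_le_mul_right _ (hw (k + 1))
    have hsk : k + 1 ≤ s k := (Nat.lt_two_pow_self).trans_le (hpow k)
    have hsk' : s k - 1 + 1 = s k := by omega
    nlinarith
  refine ⟨hw ℓ, ?_⟩
  simpa [h0, prod_range_add_one_eq_factorial] using prod_range_mul_le_of_mul_le hstep ℓ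

/-- recursion-depth bound from the proof of Proposition 1:
if `s 0 = 1` and for every `ℓ ≥ 1`, setting `w ℓ = ⌈log₂ (2 s ℓ)⌉`, we have
`s (ℓ-1) = ⌈s ℓ / w ℓ⌉` and `s ℓ ≥ 2 s (ℓ-1)`, then for every `ℓ ≥ 1`,
`w ℓ ≥ ℓ + 1` and `s ℓ ≥ ℓ!`. -/
theorem interval_size_lower_bound (s : ℕ → ℕ) (hpos : ∀ ℓ, 0 < s ℓ)
    (h0 : s 0 = 1)
    (hrec : ∀ ℓ, 1 ≤ ℓ →
      s (ℓ - 1) = ⌈(s ℓ : ℝ) / (⌈Real.logb 2 (2 * (s ℓ : ℝ))⌉₊ : ℝ)⌉₊ ∧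
        2 * s (ℓ - 1) ≤ s ℓ)
    (ℓ : ℕ) (hℓ : 1 ≤ ℓ) :
    ℓ + 1 ≤ ⌈Real.logb 2 (2 * (s ℓ : ℝ))⌉₊ ∧ Nat.factorial ℓ ≤ s ℓ :=
  interval_size_lower_bound_general s h0 hrec ℓ
end
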